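/- The Liao density, viewed as a function of the Jacobian matrix, Q_Liao(J) = g11² + 2g12² + g22² with G = JᵀJ, equals the squared Frobenius norm ‖JᵀJ‖_F² and is a convex function of J on the space of 2×2 real matrices. -/
import Mathlib

set_option maxHeartbeats 800000

open Matrix

/-- Cauchy–Schwarz for 2-vectors. -/
lemma aux_cs (a b c d : ℝ) : (a*b+c*d)^2 ≤ (a^2+c^2)*(b^2+d^2) := by
  nlinarith [sq_nonneg (a*d - c*b)]

/-- Monotonicity of the squared Frobenius norm on the PSD order (2×2 symmetric). -/
lemma aux_mono (a b c p q r : ℝ) (ha : 0 ≤ a) (hc : 0 ≤ c) (hA : b^2 ≤ a*c)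
    (hp : 0 ≤ p) (hr : 0 ≤ r) (hE : q^2 ≤ p*r) :
    a^2 + 2*b^2 + c^2 ≤ (a+p)^2 + 2*(b+q)^2 + (c+r)^2 := by
  nlinarith [mul_nonneg ha hp, mul_nonneg hc hr, sq_nonneg (a*p - c*r),
    mul_le_mul hA hE (sq_nonneg q) (mul_nonneg ha hc), sq_nonneg (b+q),
    sq_nonneg (a*p + c*r + 2*b*q), sq_nonneg p, sq_nonneg r, sq_nonneg q]

/-- Convexity of the quadratic form `x₁² + 2x₂² + x₃²`. -/
lemma aux_qconv (t s x1 x2 x3 y1 y2 y3 : ℝ) (ht : 0 ≤ t) (hs : 0 ≤ s) (hts : t + s = 1) :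
    (t*x1+s*y1)^2 + 2*(t*x2+s*y2)^2 + (t*x3+s*y3)^2
      ≤ t*(x1^2+2*x2^2+x3^2) + s*(y1^2+2*y2^2+y3^2) := by
  nlinarith [sq_nonneg (x1-y1), sq_nonneg (x2-y2), sq_nonneg (x3-y3), mul_nonneg ht hs]

/-- The scalar core of the convexity statement, with `J = ![![a,b],![c,d]]`,
`K = ![![e,f],![g,h]]`. -/
lemma aux_key (t s a b c d e f g h : ℝ) (ht : 0 ≤ t) (hs : 0 ≤ s) (hts : t + s = 1) :
    ((t*a+s*e)^2+(t*c+s*g)^2)^2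
      + 2*((t*a+s*e)*(t*b+s*f)+(t*c+s*g)*(t*d+s*h))^2
      + ((t*b+s*f)^2+(t*d+s*h)^2)^2
    ≤ t*((a^2+c^2)^2+2*(a*b+c*d)^2+(b^2+d^2)^2)
      + s*((e^2+g^2)^2+2*(e*f+g*h)^2+(f^2+h^2)^2) := by
  obtain rfl : s = 1 - t := by linarith
  have hts' : 0 ≤ t*(1-t) := mul_nonneg ht hs
  -- Step 1: the Gram matrix of the combination is dominated (PSD order) by the
  -- combination of Gram matrices; the difference is t(1-t)·Gram(J-K).
  have h1 := aux_mono
    ((t*a+(1-t)*e)^2+(t*c+(1-t)*g)^2)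
    ((t*a+(1-t)*e)*(t*b+(1-t)*f)+(t*c+(1-t)*g)*(t*d+(1-t)*h))
    ((t*b+(1-t)*f)^2+(t*d+(1-t)*h)^2)
    (t*(1-t)*((a-e)^2+(c-g)^2))
    (t*(1-t)*((a-e)*(b-f)+(c-g)*(d-h)))
    (t*(1-t)*((b-f)^2+(d-h)^2))
    (by positivity)
    (by positivity)
    (aux_cs _ _ _ _)
    (by positivity)
    (by positivity)
    (by nlinarith [mul_le_mul_of_nonneg_left (aux_cs (a-e) (b-f) (c-g) (d-h))
          (sq_nonneg (t*(1-t)))])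
  -- Step 2: convexity of the quadratic form on symmetric matrices.
  have h3 := aux_qconv t (1-t) (a^2+c^2) (a*b+c*d) (b^2+d^2)
    (e^2+g^2) (e*f+g*h) (f^2+h^2) ht hs (by ring)
  linarith [h1, h3]

/-- The Liao density equals the squared Frobenius norm of `JᵀJ` and is convex in `J`. -/
theorem stmt_19 :
    (∀ J : Matrix (Fin 2) (Fin 2) ℝ,
      (Jᵀ * J) 0 0 ^ 2 + 2 * (Jᵀ * J) 0 1 ^ 2 + (Jᵀ * J) 1 1 ^ 2 =
        ∑ i, ∑ j, ((Jᵀ * J) i j) ^ 2) ∧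
    ConvexOn ℝ Set.univ
      (fun J : Matrix (Fin 2) (Fin 2) ℝ =>
        (Jᵀ * J) 0 0 ^ 2 + 2 * (Jᵀ * J) 0 1 ^ 2 + (Jᵀ * J) 1 1 ^ 2) := by
  constructor
  · intro J
    simp only [Matrix.mul_apply, Matrix.transpose_apply, Fin.sum_univ_two]
    ring
  · refine ⟨convex_univ, ?_⟩
    intro J _ K _ t s ht hs hts
    simp only [Matrix.mul_apply, Matrix.transpose_apply, Fin.sum_univ_two,
      Matrix.add_apply, Matrix.smul_apply, smul_eq_mul]
    have hkey := aux_key t s (J 0 0) (J 0 1) (J 1 0) (J 1 1)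
      (K 0 0) (K 0 1) (K 1 0) (K 1 1) ht hs hts
    refine le_trans (le_of_eq ?_) (hkey.trans (le_of_eq ?_)) <;> ring
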